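/- Let n ≥ 1, σ > 0, let ν be a nonzero finite compactly supported measure on ℝ^n, and let g : ℝ^n → ℝ be continuous. For y ∈ ℝ^n define the tilted average ⟨g⟩_y = (∫ g(x) exp(⟨y,x⟩/σ² − ‖x‖²/(2σ²)) dν(x)) / (∫ exp(⟨y,x⟩/σ² − ‖x‖²/(2σ²)) dν(x)), and similarly the ℝ^n-valued averages ⟨x⟩_y and ⟨g(x) x⟩_y. Then y ↦ ⟨g⟩_y is differentiable on ℝ^n and ∇_y ⟨g⟩_y = (1/σ²) · (⟨g(x) x⟩_y − ⟨g⟩_y · ⟨x⟩_y). -/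

import Mathlib

open MeasureTheory Real
open scoped ENNReal
set_option synthInstance.maxHeartbeats 1000000
set_option maxHeartbeats 1000000
set_option linter.unusedSectionVars false

/-- The tilting weight `w(y, x) = exp(⟨y,x⟩/σ² − ‖x‖²/(2σ²))`. -/
noncomputable def tiltW (n : ℕ) (σ : ℝ) (y x : EuclideanSpace ℝ (Fin n)) : ℝ :=
  Real.exp ((inner ℝ y x : ℝ) / σ ^ 2 - ‖x‖ ^ 2 / (2 * σ ^ 2))

/-- The tilted average `⟨g⟩_y` of a scalar function `g` under the tilted measure. -/
noncomputable def tiltedAvg (n : ℕ) (σ : ℝ) (ν : Measure (EuclideanSpace ℝ (Fin n)))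
    (g : EuclideanSpace ℝ (Fin n) → ℝ) (y : EuclideanSpace ℝ (Fin n)) : ℝ :=
  (∫ x, tiltW n σ y x ∂ν)⁻¹ * ∫ x, tiltW n σ y x * g x ∂ν

/-- The tilted mean `⟨x⟩_y`. -/
noncomputable def tiltedMeanV (n : ℕ) (σ : ℝ) (ν : Measure (EuclideanSpace ℝ (Fin n)))
    (y : EuclideanSpace ℝ (Fin n)) : EuclideanSpace ℝ (Fin n) :=
  (∫ x, tiltW n σ y x ∂ν)⁻¹ • ∫ x, tiltW n σ y x • x ∂ν

/-- The tilted vector average `⟨g(x) x⟩_y`. -/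
noncomputable def tiltedVecAvg (n : ℕ) (σ : ℝ) (ν : Measure (EuclideanSpace ℝ (Fin n)))
    (g : EuclideanSpace ℝ (Fin n) → ℝ) (y : EuclideanSpace ℝ (Fin n)) :
    EuclideanSpace ℝ (Fin n) :=
  (∫ x, tiltW n σ y x ∂ν)⁻¹ • ∫ x, (tiltW n σ y x * g x) • x ∂ν

open Metric

namespace TiltAux

variable {n : ℕ} {σ : ℝ}

local notation "E" => EuclideanSpace ℝ (Fin n)

lemma tiltW_cont (y : E) : Continuous (fun a : E => tiltW n σ y a) :=
  Real.continuous_exp.comp (((continuous_const.inner continuous_id).div_const _).sub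
    (((continuous_norm.pow 2)).div_const _))

lemma tiltW_cont' (a : E) : Continuous (fun y : E => tiltW n σ y a) :=
  Real.continuous_exp.comp (((continuous_id.inner continuous_const).div_const _).sub
    continuous_const)

lemma tiltW_pos (y a : E) : 0 < tiltW n σ y a := Real.exp_pos _

lemma tiltW_le (hσ : 0 < σ) {R : ℝ} {y a : E} (ha : ‖a‖ ≤ R) :
    tiltW n σ y a ≤ Real.exp (‖y‖ * R / σ ^ 2) := by
  unfold tiltW
  apply Real.exp_le_exp.mpr
  have h1 : (inner ℝ y a : ℝ) ≤ ‖y‖ * R := by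
    calc (inner ℝ y a : ℝ) ≤ ‖y‖ * ‖a‖ := real_inner_le_norm y a
    _ ≤ ‖y‖ * R := by nlinarith [norm_nonneg y, norm_nonneg a]
  have h2 : 0 ≤ ‖a‖ ^ 2 / (2 * σ ^ 2) := by positivity
  have hσ2 : (0:ℝ) < σ ^ 2 := by positivity
  have h3 : (inner ℝ y a : ℝ) / σ ^ 2 ≤ ‖y‖ * R / σ ^ 2 := by gcongr
  linarith

lemma hasFDerivAt_tiltW (a : E) (y : E) :
    HasFDerivAt (fun y' : E => tiltW n σ y' a)
      ((tiltW n σ y a * (σ ^ 2)⁻¹) • innerSL ℝ a) y := by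
  have h0 : HasFDerivAt (fun y' : E => (inner ℝ a y' : ℝ)) (innerSL ℝ a) y :=
    (innerSL ℝ a).hasFDerivAt
  have h1 := (h0.const_mul ((σ ^ 2)⁻¹)).sub_const (‖a‖ ^ 2 / (2 * σ ^ 2))
  have h2 := h1.exp
  have hW : ∀ y' : E, tiltW n σ y' a
      = Real.exp ((σ ^ 2)⁻¹ * (inner ℝ a y' : ℝ) - ‖a‖ ^ 2 / (2 * σ ^ 2)) := fun y' => by
    unfold tiltW
    rw [real_inner_comm y' a, div_eq_inv_mul]
  have heq : (fun y' : E => Real.exp ((σ ^ 2)⁻¹ * (inner ℝ a y' : ℝ) - ‖a‖ ^ 2 / (2 * σ ^ 2)))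
      = fun y' : E => tiltW n σ y' a := funext fun y' => (hW y').symm
  rw [heq] at h2
  rw [hW y, ← smul_smul]
  exact h2

variable {M : Type*} [NormedAddCommGroup M] [NormedSpace ℝ M] [CompleteSpace M]

lemma tiltDeriv_cont (y : E) {c : E → M} (hc : Continuous c) :
    Continuous (fun a : E => ((tiltW n σ y a * (σ ^ 2)⁻¹) • innerSL ℝ a).smulRight (c a)) := by
  exact Continuous.comp isBoundedBilinearMap_smulRight.continuous
    ((((tiltW_cont y).mul continuous_const).smul (innerSL ℝ).continuous).prodMk hc)

lemma tiltDeriv_norm (hσ : 0 < σ) {R C : ℝ} {c : E → M} {y a : E}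
    (ha : ‖a‖ ≤ R) (hC : ‖c a‖ ≤ C) :
    ‖((tiltW n σ y a * (σ ^ 2)⁻¹) • innerSL ℝ a).smulRight (c a)‖
      ≤ Real.exp (‖y‖ * R / σ ^ 2) * (σ ^ 2)⁻¹ * R * C := by
  have hR : 0 ≤ R := (norm_nonneg a).trans ha
  have hC0 : 0 ≤ C := (norm_nonneg _).trans hC
  rw [ContinuousLinearMap.norm_smulRight_apply, norm_smul, innerSL_apply_norm]
  have h1 : ‖tiltW n σ y a * (σ ^ 2)⁻¹‖ = tiltW n σ y a * (σ ^ 2)⁻¹ := by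
    apply abs_of_nonneg
    have := (tiltW_pos (n := n) (σ := σ) y a).le
    positivity
  rw [h1]
  have hw := tiltW_le (n := n) hσ (y := y) ha
  calc tiltW n σ y a * (σ ^ 2)⁻¹ * ‖a‖ * ‖c a‖
      ≤ Real.exp (‖y‖ * R / σ ^ 2) * (σ ^ 2)⁻¹ * R * C := by
        have := (tiltW_pos (n := n) (σ := σ) y a).le
        gcongr

lemma ae_mem_ball {R : ℝ} {ν : Measure E} (hsupp : ν (closedBall (0:E) R)ᶜ = 0) :
    ∀ᵐ a ∂ν, a ∈ closedBall (0:E) R := by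
  rw [ae_iff]
  exact hsupp

lemma integrable_tilt (hσ : 0 < σ) (ν : Measure E) [IsFiniteMeasure ν] {R : ℝ}
    (hsupp : ν (closedBall (0:E) R)ᶜ = 0) {c : E → M} (hc : Continuous c) (y : E) :
    Integrable (fun a => tiltW n σ y a • c a) ν := by
  obtain ⟨C, hC⟩ := (isCompact_closedBall (0:E) R).exists_bound_of_continuousOn hc.continuousOn
  apply Integrable.mono' (integrable_const (Real.exp (‖y‖ * R / σ ^ 2) * C))
    (((tiltW_cont y).smul hc).aestronglyMeasurable)
  filter_upwards [ae_mem_ball hsupp] with a ha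
  show ‖tiltW n σ y a • c a‖ ≤ _
  rw [norm_smul]
  have ha' : ‖a‖ ≤ R := by simpa [dist_eq_norm] using ha
  have h1 : ‖tiltW n σ y a‖ = tiltW n σ y a := abs_of_pos (tiltW_pos y a)
  rw [h1]
  have h2 := tiltW_le (n := n) hσ (y := y) ha'
  have h3 := hC a ha
  have h4 := (tiltW_pos (n := n) (σ := σ) y a).le
  have h5 : (0:ℝ) ≤ ‖c a‖ := norm_nonneg _
  nlinarith [Real.exp_pos (‖y‖ * R / σ ^ 2)]

lemma integrable_tiltDeriv (hσ : 0 < σ) (ν : Measure E) [IsFiniteMeasure ν] {R : ℝ}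
    (hsupp : ν (closedBall (0:E) R)ᶜ = 0) {c : E → M} (hc : Continuous c) (y : E) :
    Integrable (fun a => ((tiltW n σ y a * (σ ^ 2)⁻¹) • innerSL ℝ a).smulRight (c a)) ν := by
  obtain ⟨C, hC⟩ := (isCompact_closedBall (0:E) R).exists_bound_of_continuousOn hc.continuousOn
  apply Integrable.mono' (integrable_const (Real.exp (‖y‖ * R / σ ^ 2) * (σ ^ 2)⁻¹ * R * C))
    ((tiltDeriv_cont y hc).aestronglyMeasurable)
  filter_upwards [ae_mem_ball hsupp] with a ha
  have ha' : ‖a‖ ≤ R := by simpa [dist_eq_norm] using ha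
  exact tiltDeriv_norm hσ ha' (hC a ha)

lemma key (hσ : 0 < σ) (ν : Measure E) [IsFiniteMeasure ν] {R : ℝ}
    (hsupp : ν (closedBall (0:E) R)ᶜ = 0) {c : E → M} (hc : Continuous c) (y : E) :
    HasFDerivAt (fun y' : E => ∫ a, tiltW n σ y' a • c a ∂ν)
      (∫ a, ((tiltW n σ y a * (σ ^ 2)⁻¹) • innerSL ℝ a).smulRight (c a) ∂ν) y := by
  obtain ⟨C, hC⟩ := (isCompact_closedBall (0:E) R).exists_bound_of_continuousOn hc.continuousOn
  apply hasFDerivAt_integral_of_dominated_of_fderiv_le (Metric.ball_mem_nhds y one_pos)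
    (Filter.Eventually.of_forall fun y' => (((tiltW_cont y').smul hc).aestronglyMeasurable))
    (integrable_tilt hσ ν hsupp hc y)
    ((tiltDeriv_cont y hc).aestronglyMeasurable)
    ?bound
    (integrable_const (Real.exp ((‖y‖ + 1) * R / σ ^ 2) * (σ ^ 2)⁻¹ * R * C))
    (Filter.Eventually.of_forall fun a y' _ => (hasFDerivAt_tiltW a y').smul_const (c a))
  filter_upwards [ae_mem_ball hsupp] with a ha y' hy'
  have ha' : ‖a‖ ≤ R := by simpa [dist_eq_norm] using ha
  have hR : 0 ≤ R := (norm_nonneg a).trans ha'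
  have hC0 : 0 ≤ C := (norm_nonneg _).trans (hC a ha)
  refine (tiltDeriv_norm hσ ha' (hC a ha)).trans ?_
  have hy'' : ‖y'‖ ≤ ‖y‖ + 1 := by
    have := mem_ball_iff_norm.mp hy'
    have h2 := norm_sub_norm_le y' y
    linarith
  gcongr

end TiltAux

open TiltAux

/-- **Differentiation of tilted averages.** For a nonzero finite compactly supported measure `ν`
and continuous `g`, the map `y ↦ ⟨g⟩_y` is differentiable and
`∇_y ⟨g⟩_y = (1/σ²)(⟨g(x) x⟩_y − ⟨g⟩_y ⟨x⟩_y)`. -/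
theorem stmt18 (n : ℕ) (hn : 1 ≤ n) (σ : ℝ) (hσ : 0 < σ)
    (ν : Measure (EuclideanSpace ℝ (Fin n))) [IsFiniteMeasure ν] (hν : ν ≠ 0)
    (hsupp : ∃ R : ℝ, ν (Metric.closedBall (0 : EuclideanSpace ℝ (Fin n)) R)ᶜ = 0)
    (g : EuclideanSpace ℝ (Fin n) → ℝ) (hg : Continuous g) :
    Differentiable ℝ (tiltedAvg n σ ν g) ∧
    ∀ y, gradient (tiltedAvg n σ ν g) y
        = (1 / σ ^ 2) • (tiltedVecAvg n σ ν g y - tiltedAvg n σ ν g y • tiltedMeanV n σ ν y) := by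
  obtain ⟨R, hsupp⟩ := hsupp
  have hσ2 : (0:ℝ) < σ ^ 2 := by positivity
  have hc1 : Continuous (fun _ : EuclideanSpace ℝ (Fin n) => (1:ℝ)) := continuous_const
  have hcgx : Continuous (fun a : EuclideanSpace ℝ (Fin n) => g a • a) := hg.smul continuous_id
  have intW : ∀ y, Integrable (fun a => tiltW n σ y a) ν := fun y => by
    simpa using integrable_tilt hσ ν hsupp hc1 y
  have intWg : ∀ y, Integrable (fun a => tiltW n σ y a * g a) ν := fun y => by
    simpa [smul_eq_mul] using integrable_tilt hσ ν hsupp hg y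
  have intWx : ∀ y, Integrable (fun a => tiltW n σ y a • a) ν := fun y =>
    integrable_tilt hσ ν hsupp continuous_id y
  have intWgx : ∀ y, Integrable (fun a => (tiltW n σ y a * g a) • a) ν := fun y => by
    have := integrable_tilt hσ ν hsupp hcgx y
    simpa [smul_smul] using this
  have hFpos : ∀ y, 0 < ∫ a, tiltW n σ y a ∂ν := fun y => by
    rw [integral_pos_iff_support_of_nonneg (fun a => (tiltW_pos y a).le) (intW y)]
    have hs : Function.support (fun a => tiltW n σ y a) = Set.univ := by
      ext a
      simp [(tiltW_pos (n := n) (σ := σ) y a).ne']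
    rw [hs]
    exact MeasureTheory.Measure.measure_univ_pos.mpr hν
  have hFd : ∀ y, HasFDerivAt (fun y' => ∫ a, tiltW n σ y' a ∂ν)
      (∫ a, ((tiltW n σ y a * (σ ^ 2)⁻¹) • innerSL ℝ a).smulRight (1:ℝ) ∂ν) y := by
    intro y
    have h := key hσ ν hsupp hc1 y
    have h2 : (fun y' : EuclideanSpace ℝ (Fin n) => ∫ a, tiltW n σ y' a • (1:ℝ) ∂ν)
        = fun y' => ∫ a, tiltW n σ y' a ∂ν := by
      funext y'
      simp
    rwa [h2] at h
  have hGd : ∀ y, HasFDerivAt (fun y' => ∫ a, tiltW n σ y' a * g a ∂ν)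
      (∫ a, ((tiltW n σ y a * (σ ^ 2)⁻¹) • innerSL ℝ a).smulRight (g a) ∂ν) y := by
    intro y
    have h := key hσ ν hsupp hg y
    have h2 : (fun y' : EuclideanSpace ℝ (Fin n) => ∫ a, tiltW n σ y' a • g a ∂ν)
        = fun y' => ∫ a, tiltW n σ y' a * g a ∂ν := by
      funext y'
      simp [smul_eq_mul]
    rwa [h2] at h
  have main : ∀ y, HasGradientAt (tiltedAvg n σ ν g)
      ((1 / σ ^ 2) • (tiltedVecAvg n σ ν g y - tiltedAvg n σ ν g y • tiltedMeanV n σ ν y)) y := by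
    intro y
    set Iw := ∫ a, tiltW n σ y a ∂ν with hIw
    set Ig := ∫ a, tiltW n σ y a * g a ∂ν with hIg
    set DF := ∫ a, ((tiltW n σ y a * (σ ^ 2)⁻¹) • innerSL ℝ a).smulRight (1:ℝ) ∂ν with hDF
    set DG := ∫ a, ((tiltW n σ y a * (σ ^ 2)⁻¹) • innerSL ℝ a).smulRight (g a) ∂ν with hDG
    have hinv : HasFDerivAt (fun y' => (∫ a, tiltW n σ y' a ∂ν)⁻¹) (-(Iw ^ 2)⁻¹ • DF) y :=
      (hasDerivAt_inv (hFpos y).ne').comp_hasFDerivAt y (hFd y)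
    have hD : HasFDerivAt (tiltedAvg n σ ν g) (Iw⁻¹ • DG + Ig • (-(Iw ^ 2)⁻¹ • DF)) y :=
      hinv.mul (hGd y)
    rw [hasGradientAt_iff_hasFDerivAt]
    have heq : (InnerProductSpace.toDual ℝ (EuclideanSpace ℝ (Fin n))
          ((1 / σ ^ 2) • (tiltedVecAvg n σ ν g y - tiltedAvg n σ ν g y • tiltedMeanV n σ ν y))
          : EuclideanSpace ℝ (Fin n) →L[ℝ] ℝ)
        = Iw⁻¹ • DG + Ig • (-(Iw ^ 2)⁻¹ • DF) := by
      apply ContinuousLinearMap.ext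
      intro h
      have hDGh : DG h = (σ ^ 2)⁻¹ * ∫ a, tiltW n σ y a * (inner ℝ h a : ℝ) * g a ∂ν := by
        rw [hDG, ContinuousLinearMap.integral_apply (integrable_tiltDeriv hσ ν hsupp hg y),
          ← integral_const_mul]
        congr 1
        funext a
        simp only [ContinuousLinearMap.smulRight_apply, ContinuousLinearMap.smul_apply,
          innerSL_apply_apply, smul_eq_mul]
        rw [real_inner_comm a h]
        ring
      have hDFh : DF h = (σ ^ 2)⁻¹ * ∫ a, tiltW n σ y a * (inner ℝ h a : ℝ) ∂ν := by
        rw [hDF, ContinuousLinearMap.integral_apply (integrable_tiltDeriv hσ ν hsupp hc1 y),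
          ← integral_const_mul]
        congr 1
        funext a
        simp only [ContinuousLinearMap.smulRight_apply, ContinuousLinearMap.smul_apply,
          innerSL_apply_apply, smul_eq_mul, mul_one]
        rw [real_inner_comm a h]
        ring
      have hint1 : (inner ℝ (∫ a, (tiltW n σ y a * g a) • a ∂ν) h : ℝ)
          = ∫ a, tiltW n σ y a * (inner ℝ h a : ℝ) * g a ∂ν := by
        rw [real_inner_comm]
        have hcc := (innerSL ℝ h).integral_comp_comm (intWgx y)
        simp only [innerSL_apply_apply, real_inner_smul_right] at hcc
        rw [← hcc]
        congr 1
        funext a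
        ring
      have hint2 : (inner ℝ (∫ a, tiltW n σ y a • a ∂ν) h : ℝ)
          = ∫ a, tiltW n σ y a * (inner ℝ h a : ℝ) ∂ν := by
        rw [real_inner_comm]
        have hcc := (innerSL ℝ h).integral_comp_comm (intWx y)
        simp only [innerSL_apply_apply, real_inner_smul_right] at hcc
        rw [← hcc]
      rw [InnerProductSpace.toDual_apply_apply]
      rw [real_inner_smul_left, inner_sub_left]
      unfold tiltedVecAvg tiltedMeanV tiltedAvg
      rw [real_inner_smul_left, real_inner_smul_left, real_inner_smul_left, hint1, hint2]
      simp only [ContinuousLinearMap.add_apply, ContinuousLinearMap.smul_apply,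
        ContinuousLinearMap.neg_apply, smul_eq_mul]
      rw [hDGh, hDFh]
      have hIw0 : Iw ≠ 0 := (hFpos y).ne'
      rw [← hIw, ← hIg]
      field_simp
      ring
    rw [heq]
    exact hD
  exact ⟨fun y => (main y).differentiableAt, fun y => (main y).gradient⟩
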